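/- Let I and J be adjacent facets of SC(Q) with I \ {i} = J \ {j}. Then the root function of J is obtained from that of I by: r(J,k) = s_{r(I,i)}(r(I,k)) if min(i,j) < k ≤ max(i,j), and r(J,k) = r(I,k) otherwise. -/

import Mathlib

open scoped RealInnerProductSpace Classical

namespace SubwordBrick

variable {B : Type} [DecidableEq B] [Fintype B]
variable {W : Type} [Group W]
variable {M : CoxeterMatrix B} (cs : CoxeterSystem M W)
variable {V : Type} [NormedAddCommGroup V] [InnerProductSpace ℝ V]
variable (pi : W →* (V ≃ₗᵢ[ℝ] V)) (α : B → V)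

/-- The set of positive roots: roots (elements of the `W`-orbit of the simple roots) that are
nonnegative linear combinations of the simple roots. -/
def PosRoot : Set V :=
  {v | (∃ (w : W) (b : B), v = pi w (α b)) ∧
    ∃ c : B → ℝ, (∀ b, 0 ≤ c b) ∧ v = ∑ b, c b • α b}

/-- `pi` together with the simple roots `α` is the standard geometric representation of the
Coxeter system `cs` on the Euclidean space `V`. -/
structure IsGeometricRep : Prop where
  injective : Function.Injective pi
  root_ne_zero : ∀ b, α b ≠ 0
  indep : LinearIndependent ℝ α
  span_top : Submodule.span ℝ (Set.range α) = ⊤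
  simple_apply : ∀ b (v : V),
    pi (cs.simple b) v = v - (2 * ⟪α b, v⟫ / ⟪α b, α b⟫) • α b
  inner_eq : ∀ b b', b ≠ b' →
    ⟪α b, α b'⟫ = -(‖α b‖ * ‖α b'‖) * Real.cos (Real.pi / (M b b' : ℝ))

/-- A word is reduced if its length equals the Coxeter length of its product. -/
def IsReducedWord (l : List B) : Prop := cs.length (cs.wordProd l) = l.length

/-- The Demazure product of a word. -/
noncomputable def demazure (Q : List B) : W :=
  Q.foldl (fun w b => if cs.length (w * cs.simple b) = cs.length w + 1
    then w * cs.simple b else w) 1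

/-- The word formed by the letters of `Q` at positions not in `I`. -/
def complementWord (Q : List B) (I : Finset (Fin Q.length)) : List B :=
  ((List.finRange Q.length).filter (fun z => z ∉ I)).map Q.get

/-- `I` is a facet of the subword complex `SC(Q)` (with respect to `w0`): the complement of `I` in
`Q` is a reduced expression of `w0`. -/
def IsFacet (w0 : W) (Q : List B) (I : Finset (Fin Q.length)) : Prop :=
  IsReducedWord cs (complementWord Q I) ∧ cs.wordProd (complementWord Q I) = w0

/-- The product `σ_I^{[1,k-1]}` of the letters of `Q` at positions before `k` that are not
in `I` (positions are 0-indexed here). -/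
def sigmaBefore (Q : List B) (I : Finset (Fin Q.length)) (k : ℕ) : W :=
  cs.wordProd (((List.finRange Q.length).filter
    (fun z => z ∉ I ∧ (z : ℕ) < k)).map Q.get)

/-- The root function `r(I,k) = σ_I^{[1,k-1]} (α_{q_k})`. -/
def rootFn (Q : List B) (I : Finset (Fin Q.length)) (k : Fin Q.length) : V :=
  pi (sigmaBefore cs Q I (k : ℕ)) (α (Q.get k))

/-- The weight function `w(I,k) = σ_I^{[1,k-1]} (ω_{q_k})`. -/
def weightFn (ω : B → V) (Q : List B) (I : Finset (Fin Q.length)) (k : Fin Q.length) : V :=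
  pi (sigmaBefore cs Q I (k : ℕ)) (ω (Q.get k))

/-- The brick vector of a facet. -/
def brick (ω : B → V) (Q : List B) (I : Finset (Fin Q.length)) : V :=
  ∑ k : Fin Q.length, weightFn cs pi ω Q I k

/-- The root configuration of a facet, as a multiset. -/
def rootConf (Q : List B) (I : Finset (Fin Q.length)) : Multiset V :=
  I.val.map (fun i => rootFn cs pi α Q I i)

/-- The root configuration of `I` is a linear basis of `V`. -/
def IsBasisConfig (Q : List B) (I : Finset (Fin Q.length)) : Prop :=
  LinearIndependent ℝ (fun i : I => rootFn cs pi α Q I (i : Fin Q.length)) ∧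
    Submodule.span ℝ (Set.range (fun i : I => rootFn cs pi α Q I (i : Fin Q.length))) = ⊤

/-- The word `Q` is realizing: the root configuration of every facet is a basis of `V`. -/
def IsRealizing (w0 : W) (Q : List B) : Prop :=
  ∀ I, IsFacet cs w0 Q I → IsBasisConfig cs pi α Q I

/-- Facets `I` and `J` are adjacent, related by the flip exchanging `i` and `j`. -/
def Adjacent (Q : List B) (I J : Finset (Fin Q.length)) (i j : Fin Q.length) : Prop :=
  i ∈ I ∧ j ∈ J ∧ i ≠ j ∧ I.erase i = J.erase j

/-- The inversion set `inv(w) = Φ⁺ ∩ w(Φ⁻)`. -/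
def invSet (w : W) : Set V :=
  {v | v ∈ PosRoot pi α ∧ -((pi w).symm v) ∈ PosRoot pi α}


section Helpers
variable {n : ℕ}
variable {n : ℕ}

lemma filt_lt_succ_aux (p : Fin n → Prop) [DecidablePred p] (k : ℕ) :
    ∀ l : List (Fin n), l.Pairwise (· < ·) →
      l.filter (fun z => p z ∧ (z:ℕ) < k + 1) =
      l.filter (fun z => p z ∧ (z:ℕ) < k) ++ l.filter (fun z => p z ∧ (z:ℕ) = k)
  | [], _ => by simp
  | a :: l, hp => by
    rw [List.pairwise_cons] at hp
    obtain ⟨ha, hl⟩ := hp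
    have ih := filt_lt_succ_aux p k l hl
    rcases lt_trichotomy (a:ℕ) k with hak | hak | hak
    · simp only [List.filter_cons, ih]
      have h1 : ((a:ℕ) < k + 1) = True := by simp; omega
      have h2 : ((a:ℕ) < k) = True := by simp; omega
      have h3 : ((a:ℕ) = k) = False := by simp; omega
      by_cases hpa : p a <;> simp [h1, h2, h3, hpa]
    · have hnil : ∀ (q : Fin n → Prop) [DecidablePred q],
          (∀ z : Fin n, (z:ℕ) > k → ¬ q z) → l.filter (fun z => decide (q z)) = [] := by
        intro q _ hq
        apply List.filter_eq_nil_iff.mpr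
        intro z hz
        simp only [decide_eq_true_eq]
        exact hq z (by have := ha z hz; rw [← hak]; exact this)
      have e1 : l.filter (fun z => decide (p z ∧ (z:ℕ) < k + 1)) = [] :=
        hnil _ (by intro z hz h'; omega)
      have e2 : l.filter (fun z => decide (p z ∧ (z:ℕ) < k)) = [] :=
        hnil _ (by intro z hz h'; omega)
      have e3 : l.filter (fun z => decide (p z ∧ (z:ℕ) = k)) = [] :=
        hnil _ (by intro z hz h'; omega)
      simp only [List.filter_cons, e1, e2, e3]
      have h1 : ((a:ℕ) < k + 1) = True := by simp; omega
      have h2 : ((a:ℕ) < k) = False := by simp; omega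
      have h3 : ((a:ℕ) = k) = True := by simp [hak]
      by_cases hpa : p a <;> simp [h1, h2, h3, hpa]
    · have hnil : ∀ (q : Fin n → Prop) [DecidablePred q],
          (∀ z : Fin n, (z:ℕ) > k → ¬ q z) → (a :: l).filter (fun z => decide (q z)) = [] := by
        intro q _ hq
        apply List.filter_eq_nil_iff.mpr
        intro z hz
        simp only [decide_eq_true_eq]
        rcases List.mem_cons.mp hz with rfl | hz
        · exact hq z hak
        · exact hq z (lt_trans hak (ha z hz))
      rw [hnil _ (by intro z hz h'; omega), hnil _ (by intro z hz h'; omega),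
        hnil _ (by intro z hz h'; omega)]
      simp

lemma filt_lt_succ (p : Fin n → Prop) [DecidablePred p] (k : ℕ) :
    (List.finRange n).filter (fun z => p z ∧ (z:ℕ) < k + 1) =
      (List.finRange n).filter (fun z => p z ∧ (z:ℕ) < k) ++
      (List.finRange n).filter (fun z => p z ∧ (z:ℕ) = k) :=
  filt_lt_succ_aux p k _ (List.pairwise_lt_finRange n)

lemma filt_eq_k (p : Fin n → Prop) [DecidablePred p] {k : ℕ} (hk : k < n) :
    (List.finRange n).filter (fun z => p z ∧ (z:ℕ) = k) =
      if p ⟨k, hk⟩ then [⟨k, hk⟩] else [] := by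
  by_cases hp : p ⟨k, hk⟩
  · rw [if_pos hp]
    have : (List.finRange n).filter (fun z => p z ∧ (z:ℕ) = k) =
        (List.finRange n).filter (fun z => z = ⟨k, hk⟩) := by
      apply List.filter_congr
      intro a _
      simp only [decide_eq_decide]
      constructor
      · rintro ⟨-, h2⟩; exact Fin.ext h2
      · rintro rfl; exact ⟨hp, rfl⟩
    rw [this]
    rw [List.filter_eq]
    rw [List.count_eq_one_of_mem (List.nodup_finRange n) (List.mem_finRange _)]
    simp
  · rw [if_neg hp]
    apply List.filter_eq_nil_iff.mpr
    intro z hz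
    simp only [decide_eq_true_eq, not_and]
    intro hpz hzk
    exact hp ((Fin.ext hzk : z = ⟨k, hk⟩) ▸ hpz)

lemma filt_eq_k_ge (p : Fin n → Prop) [DecidablePred p] {k : ℕ} (hk : n ≤ k) :
    (List.finRange n).filter (fun z => p z ∧ (z:ℕ) = k) = [] := by
  apply List.filter_eq_nil_iff.mpr
  intro z hz
  simp only [decide_eq_true_eq, not_and]
  intro _ hzk
  exact absurd (hzk ▸ z.isLt) (by omega)
end Helpers

section
variable {B : Type} [DecidableEq B] [Fintype B]
variable {W : Type} [Group W]
variable {M : CoxeterMatrix B} (cs : CoxeterSystem M W)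

lemma sigmaBefore_zero (Q : List B) (I : Finset (Fin Q.length)) :
    sigmaBefore cs Q I 0 = 1 := by
  unfold sigmaBefore
  have : (List.finRange Q.length).filter (fun z => decide ((z ∉ I) ∧ (z:ℕ) < 0)) = [] := by
    apply List.filter_eq_nil_iff.mpr; intro z _; simp
  rw [this]; simp [CoxeterSystem.wordProd]

lemma sigmaBefore_succ_mem (Q : List B) (I : Finset (Fin Q.length)) {k : ℕ}
    (hk : k < Q.length) (hm : (⟨k, hk⟩ : Fin Q.length) ∈ I) :
    sigmaBefore cs Q I (k + 1) = sigmaBefore cs Q I k := by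
  unfold sigmaBefore
  rw [filt_lt_succ (fun z => z ∉ I) k, filt_eq_k (fun z => z ∉ I) hk, if_neg (by simpa using hm)]
  simp

lemma sigmaBefore_succ_not_mem (Q : List B) (I : Finset (Fin Q.length)) {k : ℕ}
    (hk : k < Q.length) (hm : (⟨k, hk⟩ : Fin Q.length) ∉ I) :
    sigmaBefore cs Q I (k + 1) =
      sigmaBefore cs Q I k * cs.simple (Q.get ⟨k, hk⟩) := by
  unfold sigmaBefore
  rw [filt_lt_succ (fun z => z ∉ I) k, filt_eq_k (fun z => z ∉ I) hk, if_pos hm]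
  rw [List.map_append, CoxeterSystem.wordProd_append]
  simp [CoxeterSystem.wordProd]

lemma sigmaBefore_succ_ge (Q : List B) (I : Finset (Fin Q.length)) {k : ℕ}
    (hk : Q.length ≤ k) :
    sigmaBefore cs Q I (k + 1) = sigmaBefore cs Q I k := by
  unfold sigmaBefore
  rw [filt_lt_succ (fun z => z ∉ I) k, filt_eq_k_ge (fun z => z ∉ I) hk]
  simp

lemma sigmaBefore_length (Q : List B) (I : Finset (Fin Q.length)) :
    sigmaBefore cs Q I Q.length = cs.wordProd (complementWord Q I) := by
  unfold sigmaBefore complementWord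
  congr 1
  congr 1
  apply List.filter_congr
  intro z _
  simp [z.isLt]
end


section Main
set_option linter.unusedSectionVars false
variable {B : Type} [DecidableEq B] [Fintype B]
variable {W : Type} [Group W]
variable {M : CoxeterMatrix B} (cs : CoxeterSystem M W)
variable {V : Type} [NormedAddCommGroup V] [InnerProductSpace ℝ V]
variable (pi : W →* (V ≃ₗᵢ[ℝ] V)) (α : B → V)

/-- The reflection associated to position `i` of facet `I`. -/
def reflAt (Q : List B) (I : Finset (Fin Q.length)) (i : Fin Q.length) : W :=
  sigmaBefore cs Q I (i : ℕ) * cs.simple (Q.get i) * (sigmaBefore cs Q I (i : ℕ))⁻¹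

lemma reflAt_inv (Q : List B) (I : Finset (Fin Q.length)) (i : Fin Q.length) :
    (reflAt cs Q I i)⁻¹ = reflAt cs Q I i := by
  unfold reflAt
  rw [mul_inv_rev, mul_inv_rev, inv_inv, cs.inv_simple, mul_assoc]

lemma refl_apply (h : IsGeometricRep cs pi α) (w : W) (b : B) (v : V) :
    pi (w * cs.simple b * w⁻¹) v =
      v - (2 * ⟪pi w (α b), v⟫ / ⟪pi w (α b), pi w (α b)⟫) • pi w (α b) := by
  have hinv : (pi w⁻¹) v = (pi w).symm v := by
    rw [map_inv]
    rfl
  rw [map_mul, map_mul, LinearIsometryEquiv.coe_mul, LinearIsometryEquiv.coe_mul]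
  simp only [Function.comp_apply, hinv]
  rw [h.simple_apply]
  rw [map_sub, map_smul]
  rw [LinearIsometryEquiv.apply_symm_apply]
  have e1 : ⟪pi w (α b), pi w (α b)⟫ = ⟪α b, α b⟫ :=
    LinearIsometryEquiv.inner_map_map (pi w) (α b) (α b)
  have e2 : ⟪α b, (pi w).symm v⟫ = ⟪pi w (α b), v⟫ := by
    conv_rhs => rw [← LinearIsometryEquiv.apply_symm_apply (pi w) v]
    rw [LinearIsometryEquiv.inner_map_map]
  rw [e2, e1]


lemma sigma_rel (Q : List B) (I J : Finset (Fin Q.length)) (i j : Fin Q.length)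
    (hij : (i : ℕ) < (j : ℕ)) (hiI : i ∈ I) (hjI : j ∉ I) (hiJ : i ∉ J) (hjJ : j ∈ J)
    (hmem : ∀ z, z ≠ i → z ≠ j → (z ∈ I ↔ z ∈ J)) (k : ℕ) :
    sigmaBefore cs Q J k =
      (if k ≤ (i : ℕ) then 1
       else if k ≤ (j : ℕ) then reflAt cs Q I i
       else reflAt cs Q I i * (reflAt cs Q I j)⁻¹) * sigmaBefore cs Q I k := by
  induction k with
  | zero =>
    rw [if_pos (Nat.zero_le _), one_mul]
    rw [sigmaBefore_zero, sigmaBefore_zero]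
  | succ k ih =>
    by_cases hk : k < Q.length
    · by_cases hki : k = (i : ℕ)
      · have hzi : (⟨k, hk⟩ : Fin Q.length) = i := Fin.ext hki
        rw [sigmaBefore_succ_not_mem cs Q J hk (by rw [hzi]; exact hiJ),
          sigmaBefore_succ_mem cs Q I hk (by rw [hzi]; exact hiI), ih]
        rw [if_pos (by omega), one_mul]
        rw [if_neg (by omega), if_pos (by omega)]
        rw [hzi, hki]
        unfold reflAt
        group
      · by_cases hkj : k = (j : ℕ)
        · have hzj : (⟨k, hk⟩ : Fin Q.length) = j := Fin.ext hkj
          rw [sigmaBefore_succ_mem cs Q J hk (by rw [hzj]; exact hjJ),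
            sigmaBefore_succ_not_mem cs Q I hk (by rw [hzj]; exact hjI), ih]
          rw [if_neg (by omega), if_pos (by omega)]
          rw [if_neg (by omega), if_neg (by omega)]
          rw [hzj, hkj]
          unfold reflAt
          group
        · have hcoef : (if k + 1 ≤ (i : ℕ) then (1 : W)
              else if k + 1 ≤ (j : ℕ) then reflAt cs Q I i
              else reflAt cs Q I i * (reflAt cs Q I j)⁻¹) =
              (if k ≤ (i : ℕ) then 1
              else if k ≤ (j : ℕ) then reflAt cs Q I i
              else reflAt cs Q I i * (reflAt cs Q I j)⁻¹) := by
            split_ifs <;> first | rfl | omega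
          have hzi : (⟨k, hk⟩ : Fin Q.length) ≠ i := by
            intro hc; exact hki (by rw [← hc])
          have hzj : (⟨k, hk⟩ : Fin Q.length) ≠ j := by
            intro hc; exact hkj (by rw [← hc])
          by_cases hmI : (⟨k, hk⟩ : Fin Q.length) ∈ I
          · rw [sigmaBefore_succ_mem cs Q J hk ((hmem _ hzi hzj).mp hmI),
              sigmaBefore_succ_mem cs Q I hk hmI, ih, hcoef]
          · rw [sigmaBefore_succ_not_mem cs Q J hk (fun hc => hmI ((hmem _ hzi hzj).mpr hc)),
              sigmaBefore_succ_not_mem cs Q I hk hmI, ih, hcoef, mul_assoc]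
    · have hn : Q.length ≤ k := Nat.le_of_not_lt hk
      have hcoef : (if k + 1 ≤ (i : ℕ) then (1 : W)
          else if k + 1 ≤ (j : ℕ) then reflAt cs Q I i
          else reflAt cs Q I i * (reflAt cs Q I j)⁻¹) =
          (if k ≤ (i : ℕ) then 1
          else if k ≤ (j : ℕ) then reflAt cs Q I i
          else reflAt cs Q I i * (reflAt cs Q I j)⁻¹) := by
        have hi := i.isLt; have hj := j.isLt
        split_ifs <;> first | rfl | omega
      rw [sigmaBefore_succ_ge cs Q J hn, sigmaBefore_succ_ge cs Q I hn, ih, hcoef]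

lemma reflAt_eq (Q : List B) (I J : Finset (Fin Q.length)) (i j : Fin Q.length)
    (hij : (i : ℕ) < (j : ℕ)) (hiI : i ∈ I) (hjI : j ∉ I) (hiJ : i ∉ J) (hjJ : j ∈ J)
    (hmem : ∀ z, z ≠ i → z ≠ j → (z ∈ I ↔ z ∈ J))
    (hprod : cs.wordProd (complementWord Q J) = cs.wordProd (complementWord Q I)) :
    reflAt cs Q I i = reflAt cs Q I j := by
  have hrel := sigma_rel cs Q I J i j hij hiI hjI hiJ hjJ hmem Q.length
  rw [sigmaBefore_length, sigmaBefore_length, hprod,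
    if_neg (by have := i.isLt; omega), if_neg (by have := j.isLt; omega)] at hrel
  have h1 : reflAt cs Q I i * (reflAt cs Q I j)⁻¹ = 1 := by
    refine (mul_right_cancel (b := cs.wordProd (complementWord Q I)) ?_).symm
    rw [one_mul]
    exact hrel
  rw [mul_inv_eq_one] at h1
  exact h1

lemma sigma_flip (Q : List B) (I J : Finset (Fin Q.length)) (i j : Fin Q.length)
    (hij : (i : ℕ) < (j : ℕ)) (hiI : i ∈ I) (hjI : j ∉ I) (hiJ : i ∉ J) (hjJ : j ∈ J)
    (hmem : ∀ z, z ≠ i → z ≠ j → (z ∈ I ↔ z ∈ J))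
    (hprod : cs.wordProd (complementWord Q J) = cs.wordProd (complementWord Q I)) (k : ℕ) :
    sigmaBefore cs Q J k =
      if (i : ℕ) < k ∧ k ≤ (j : ℕ) then reflAt cs Q I i * sigmaBefore cs Q I k
      else sigmaBefore cs Q I k := by
  rw [sigma_rel cs Q I J i j hij hiI hjI hiJ hjJ hmem k]
  have heq := reflAt_eq cs Q I J i j hij hiI hjI hiJ hjJ hmem hprod
  by_cases h1 : k ≤ (i : ℕ)
  · rw [if_pos h1, if_neg (by omega), one_mul]
  · by_cases h2 : k ≤ (j : ℕ)
    · rw [if_neg h1, if_pos h2, if_pos (by omega)]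
    · rw [if_neg h1, if_neg h2, if_neg (by omega), heq, mul_inv_cancel, one_mul]

end Main

/-- If `I` and `J` are adjacent facets with `I \ {i} = J \ {j}`, then the root function of `J`
is obtained from that of `I` by applying the reflection `s_{r(I,i)}` to `r(I,k)` when
`min(i,j) < k ≤ max(i,j)`, and leaving it unchanged otherwise. -/
theorem rootFn_flip [Finite W] (h : IsGeometricRep cs pi α)
    (w0 : W) (hw0 : ∀ w : W, cs.length w ≤ cs.length w0)
    (Q : List B) (hdem : demazure cs Q = w0)
    (I J : Finset (Fin Q.length)) (hI : IsFacet cs w0 Q I) (hJ : IsFacet cs w0 Q J)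
    (i j : Fin Q.length) (hadj : Adjacent Q I J i j) (k : Fin Q.length) :
    rootFn cs pi α Q J k =
      if min (i : ℕ) (j : ℕ) < (k : ℕ) ∧ (k : ℕ) ≤ max (i : ℕ) (j : ℕ) then
        rootFn cs pi α Q I k -
          (2 * ⟪rootFn cs pi α Q I i, rootFn cs pi α Q I k⟫ /
            ⟪rootFn cs pi α Q I i, rootFn cs pi α Q I i⟫) • rootFn cs pi α Q I i
      else rootFn cs pi α Q I k := by
  obtain ⟨hiI, hjJ, hij, herase⟩ := hadj
  have hiJ : i ∉ J := by
    intro hc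
    have h1 : i ∈ J.erase j := Finset.mem_erase.mpr ⟨hij, hc⟩
    rw [← herase] at h1
    exact (Finset.mem_erase.mp h1).1 rfl
  have hjI : j ∉ I := by
    intro hc
    have h1 : j ∈ I.erase i := Finset.mem_erase.mpr ⟨fun hc' => hij hc'.symm, hc⟩
    rw [herase] at h1
    exact (Finset.mem_erase.mp h1).1 rfl
  have hmem : ∀ z, z ≠ i → z ≠ j → (z ∈ I ↔ z ∈ J) := by
    intro z hzi hzj
    constructor
    · intro hz
      have h1 : z ∈ I.erase i := Finset.mem_erase.mpr ⟨hzi, hz⟩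
      rw [herase] at h1
      exact (Finset.mem_erase.mp h1).2
    · intro hz
      have h1 : z ∈ J.erase j := Finset.mem_erase.mpr ⟨hzj, hz⟩
      rw [← herase] at h1
      exact (Finset.mem_erase.mp h1).2
  have hprod : cs.wordProd (complementWord Q J) = cs.wordProd (complementWord Q I) :=
    hJ.2.trans hI.2.symm
  have hvne : (i : ℕ) ≠ (j : ℕ) := fun hc => hij (Fin.ext hc)
  have key : ∀ m : ℕ,
      sigmaBefore cs Q J m =
        if min (i : ℕ) (j : ℕ) < m ∧ m ≤ max (i : ℕ) (j : ℕ) then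
          reflAt cs Q I i * sigmaBefore cs Q I m
        else sigmaBefore cs Q I m := by
    rcases Nat.lt_or_ge (i : ℕ) (j : ℕ) with hlt | hge
    · intro m
      rw [min_eq_left hlt.le, max_eq_right hlt.le]
      exact sigma_flip cs Q I J i j hlt hiI hjI hiJ hjJ hmem hprod m
    · have hlt : (j : ℕ) < (i : ℕ) := lt_of_le_of_ne hge (Ne.symm hvne)
      have hmem' : ∀ z, z ≠ j → z ≠ i → (z ∈ J ↔ z ∈ I) := fun z h1 h2 => (hmem z h2 h1).symm
      have hflip := sigma_flip cs Q J I j i hlt hjJ hiJ hjI hiI hmem' hprod.symm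
      have heq := reflAt_eq cs Q J I j i hlt hjJ hiJ hjI hiI hmem' hprod.symm
      have htinv : (reflAt cs Q J j)⁻¹ = reflAt cs Q J j := reflAt_inv cs Q J j
      set t := reflAt cs Q J j with ht
      have ht1 : t * t = 1 := by
        nth_rewrite 1 [← htinv]
        rw [inv_mul_cancel]
      have hJi : sigmaBefore cs Q J (i : ℕ) = t * sigmaBefore cs Q I (i : ℕ) := by
        have h2 := hflip (i : ℕ)
        rw [if_pos ⟨hlt, le_refl _⟩] at h2
        rw [h2, ← mul_assoc, ht1, one_mul]
      have hv : reflAt cs Q J i = t * reflAt cs Q I i * t⁻¹ := by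
        unfold reflAt
        rw [hJi]
        group
      have hveq : reflAt cs Q I i = t := by
        have h2 : t * reflAt cs Q I i * t⁻¹ = t := by rw [← hv]; exact heq.symm
        calc reflAt cs Q I i
            = t⁻¹ * (t * reflAt cs Q I i * t⁻¹) * t := by group
          _ = t⁻¹ * t * t := by rw [h2]
          _ = t := by group
      intro m
      rw [min_eq_right hlt.le, max_eq_left hlt.le]
      have hf := hflip m
      by_cases hc : (j : ℕ) < m ∧ m ≤ (i : ℕ)
      · rw [if_pos hc] at hf
        rw [if_pos hc, hveq, hf, ← mul_assoc, ht1, one_mul]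
      · rw [if_neg hc] at hf
        rw [if_neg hc, hf]
  unfold rootFn
  rw [key (k : ℕ)]
  by_cases hc : min (i : ℕ) (j : ℕ) < (k : ℕ) ∧ (k : ℕ) ≤ max (i : ℕ) (j : ℕ)
  · rw [if_pos hc, if_pos hc, map_mul, LinearIsometryEquiv.coe_mul, Function.comp_apply]
    unfold reflAt
    rw [refl_apply cs pi α h]
  · rw [if_neg hc, if_neg hc]

end SubwordBrick
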